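/- Let α = \overline{01} (the string 010101⋯ repeating 01) and β = 1\overline{0} (the string 1000⋯, a 1 followed by all 0s). Then (α,β) is an admissible pair, and a decimal d belongs to Ω^•_{(α,β)} if and only if d does not contain 11 as a substring, i.e., there is no j ∈ ℤ with d(j) = 1 and d(j+1) = 1. -/

import Mathlib

open scoped Classical

/-- Infinite binary strings. -/
abbrev Omega : Type := ℕ → Bool

/-- The shift operator. -/
def shift (ω : Omega) : Omega := fun n => ω (n + 1)

/-- Strict lexicographic order on `Omega`. -/
def lexLt (σ ω : Omega) : Prop :=
  ∃ k : ℕ, (∀ i, i < k → σ i = ω i) ∧ σ k < ω k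

/-- Non-strict lexicographic order on `Omega`. -/
def lexLe (σ ω : Omega) : Prop := lexLt σ ω ∨ σ = ω

/-- An admissible pair of strings. -/
def Admissible (α β : Omega) : Prop :=
  α 0 = false ∧ α 1 = true ∧ β 0 = true ∧ β 1 = false ∧
  (∀ n : ℕ, ¬ (lexLt α (shift^[n] α) ∧ lexLe (shift^[n] α) β)) ∧
  (∀ n : ℕ, ¬ (lexLe α (shift^[n] β) ∧ lexLt (shift^[n] β) β))

/-- The address space `Ω_{(α,β,−)}`. -/
def OmegaMinus (α β : Omega) : Set Omega :=
  {ω | ∀ n : ℕ, ¬ (lexLt α (shift^[n] ω) ∧ lexLe (shift^[n] ω) β)}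

/-- The address space `Ω_{(α,β,+)}`. -/
def OmegaPlus (α β : Omega) : Set Omega :=
  {ω | ∀ n : ℕ, ¬ (lexLe α (shift^[n] ω) ∧ lexLt (shift^[n] ω) β)}

/-- The address space `Ω_{(α,β)}`. -/
def OmegaUnion (α β : Omega) : Set Omega := OmegaMinus α β ∪ OmegaPlus α β

/-- Length-`n` initial segments of the elements of `Γ`. -/
def initSegs (Γ : Set Omega) (n : ℕ) : Set (Fin n → Bool) :=
  (fun ω (i : Fin n) => ω i) '' Γ

/-- Exponential growth rate `h(Γ)`. -/
noncomputable def growth (Γ : Set Omega) : ℝ :=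
  Filter.limsup (fun n : ℕ => Real.log ((initSegs Γ n).ncard) / (n : ℝ)) Filter.atTop

/-- The projection map `π_x`. -/
noncomputable def proj (x : ℝ) (ω : Omega) : ℝ :=
  (1 - x) * ∑' k : ℕ, (if ω k then (1 : ℝ) else 0) * x ^ k

/-- The equation `Σ α_n x^n = Σ β_n x^n`. -/
def seriesEq (α β : Omega) (x : ℝ) : Prop :=
  (∑' n : ℕ, (if α n then (1 : ℝ) else 0) * x ^ n) =
    (∑' n : ℕ, (if β n then (1 : ℝ) else 0) * x ^ n)

/-- Solutions in `[1/2,1)` of `Σ α_n x^n = Σ β_n x^n`. -/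
def baseSet (α β : Omega) : Set ℝ :=
  {x : ℝ | x ∈ Set.Ico (1/2 : ℝ) 1 ∧ seriesEq α β x}

/-- A decimal: a two-sided binary string vanishing far to the left. -/
def IsDecimal (d : ℤ → Bool) : Prop := ∃ m : ℤ, ∀ j, j < m → d j = false

/-- Strict order on decimals. -/
def decLt (d e : ℤ → Bool) : Prop :=
  ∃ j : ℤ, (∀ i, i < j → d i = e i) ∧ d j < e j

/-- The set `Γ^•` of decimals obtained from strings in `Γ`. -/
def dot (Γ : Set Omega) : Set (ℤ → Bool) :=
  {d | ∃ m : ℤ, ∃ γ ∈ Γ, (∀ j, j < m → d j = false) ∧ ∀ i : ℕ, d (m + i) = γ i}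

/-- Prepend a `0` to a string. -/
def cons0 (ω : Omega) : Omega := fun n => match n with | 0 => false | k + 1 => ω k

/-- The space `Ω⁰_{(α,β,−)}`. -/
def Omega0Minus (α β : Omega) : Set Omega :=
  {ω ∈ OmegaMinus α β | lexLe (cons0 ω) α}

/-- The space `Ω⁰_{(α,β,+)}`. -/
def Omega0Plus (α β : Omega) : Set Omega :=
  {ω ∈ OmegaPlus α β | lexLt (cons0 ω) α}

/-- The address space of decimals `Ω^•_{(α,β,−)}`. -/
def dotMinus (α β : Omega) : Set (ℤ → Bool) := dot (Omega0Minus α β)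

/-- The address space of decimals `Ω^•_{(α,β,+)}`. -/
def dotPlus (α β : Omega) : Set (ℤ → Bool) := dot (Omega0Plus α β)

/-- The address space of decimals `Ω^•_{(α,β)}`. -/
def dotUnion (α β : Omega) : Set (ℤ → Bool) :=
  dot (Omega0Minus α β ∪ Omega0Plus α β)

/-- The radix map `d ↦ Σ_{j ∈ ℤ} d(j)·B^(−j)`. -/
noncomputable def radixVal (B : ℝ) (d : ℤ → Bool) : ℝ :=
  ∑' j : ℤ, (if d j then (1 : ℝ) else 0) * B ^ (-j)

/-- Shift invariance for a set of decimals. -/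
def ShiftInvariantDec (Γ : Set (ℤ → Bool)) : Prop :=
  ∀ d ∈ Γ, ∀ k m : ℤ,
    (fun j : ℤ => if m ≤ j then d (j + k) else false) ∈ Γ

/-!
A `11`-free string starting with `0` cannot lie strictly between `α = 0101⋯` and `β = 1000⋯`:
it would first exceed `α` at an even position, right after a `1` of `α`, creating a `11`.
Conversely, if `ω` contains `11` then `0ω` contains `011`, so either `0ω` itself or some shift of
`ω` begins with `011` and lies in `(α, β)`. Hence both `Ω⁰` spaces together are exactly the
`11`-free strings, and `(α, β)` is admissible because the shifts of `α` never meet those of `β`.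
-/

lemma shift_iterate_apply (n : ℕ) (ω : Omega) (i : ℕ) : shift^[n] ω i = ω (i + n) := by
  induction n generalizing ω with
  | zero => rfl
  | succ n ih => rw [Function.iterate_succ_apply, ih]; rfl

lemma shift_cons0 (ω : Omega) : shift (cons0 ω) = ω := rfl

lemma lexLt_irrefl (σ : Omega) : ¬ lexLt σ σ := by
  rintro ⟨k, -, h⟩
  exact lt_irrefl _ h

lemma lexLt_asymm {σ ω : Omega} (h₁ : lexLt σ ω) (h₂ : lexLt ω σ) : False := by
  obtain ⟨k₁, e₁, l₁⟩ := h₁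
  obtain ⟨k₂, e₂, l₂⟩ := h₂
  rcases lt_trichotomy k₁ k₂ with h | rfl | h
  · exact lt_irrefl _ (e₂ k₁ h ▸ l₁)
  · exact lt_asymm l₁ l₂
  · exact lt_irrefl _ (e₁ k₂ h ▸ l₂)

lemma not_lexLt_of_lexLe {σ ω : Omega} (h : lexLe σ ω) : ¬ lexLt ω σ := by
  rcases h with h | rfl
  · exact lexLt_asymm h
  · exact lexLt_irrefl σ

lemma lexLt_trichotomy (σ ω : Omega) : lexLt σ ω ∨ σ = ω ∨ lexLt ω σ := by
  by_cases hne : ∃ k, σ k ≠ ω k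
  · have hagree : ∀ i, i < Nat.find hne → σ i = ω i := fun i hi =>
      not_not.mp (Nat.find_min hne hi)
    rcases lt_or_gt_of_ne (Nat.find_spec hne) with h | h
    · exact .inl ⟨_, hagree, h⟩
    · exact .inr <| .inr ⟨_, fun i hi => (hagree i hi).symm, h⟩
  · push Not at hne
    exact .inr <| .inl (funext hne)

lemma lexLe_of_not_lexLt {σ ω : Omega} (h : ¬ lexLt ω σ) : lexLe σ ω := by
  rcases lexLt_trichotomy σ ω with h' | h' | h'
  exacts [.inl h', .inr h', (h h').elim]

def NoEleven (ω : Omega) : Prop := ∀ i, ¬ (ω i = true ∧ ω (i + 1) = true)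

lemma NoEleven.shift_iterate {ω : Omega} (hω : NoEleven ω) (n : ℕ) :
    NoEleven (shift^[n] ω) := by
  intro i
  rw [shift_iterate_apply, shift_iterate_apply, Nat.add_right_comm]
  exact hω (i + n)

lemma NoEleven.cons0 {ω : Omega} (hω : NoEleven ω) : NoEleven (cons0 ω) := by
  rintro (_ | i) ⟨h, h'⟩
  · exact Bool.false_ne_true h
  · exact hω i ⟨h, h'⟩

lemma exists_zero_one_one {σ : Omega} (h₀ : σ 0 = false) {i : ℕ} (h₁ : σ i = true)
    (h₂ : σ (i + 1) = true) : ∃ t, σ t = false ∧ σ (t + 1) = true ∧ σ (t + 2) = true := by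
  induction i with
  | zero => exact absurd (h₀ ▸ h₁) Bool.false_ne_true
  | succ k ih =>
    cases hk : σ k
    · exact ⟨k, hk, h₁, h₂⟩
    · exact ih hk h₁

/-- `α = 0101⋯`. -/
def altZeroOne : Omega := fun n => decide (n % 2 = 1)

/-- `β = 1000⋯`. -/
def oneZeros : Omega := fun n => decide (n = 0)

lemma noEleven_altZeroOne : NoEleven altZeroOne := by
  intro i
  simp only [altZeroOne, decide_eq_true_eq]
  omega

lemma noEleven_oneZeros : NoEleven oneZeros := by
  intro i
  simp [oneZeros]

lemma shift_iterate_altZeroOne_ne (m n : ℕ) : shift^[m] altZeroOne ≠ shift^[n] oneZeros := by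
  intro h
  have := congrFun h (m + 1)
  simp only [shift_iterate_apply, altZeroOne, oneZeros, decide_eq_decide] at this
  omega

lemma eq_false_of_lexLt_oneZeros {σ : Omega} (h : lexLt σ oneZeros) : σ 0 = false := by
  obtain ⟨k, -, hk⟩ := h
  obtain ⟨hσ, hβ⟩ := Bool.lt_iff.mp hk
  obtain rfl : k = 0 := by simpa [oneZeros] using hβ
  exact hσ

lemma lexLt_oneZeros {σ : Omega} (h : σ 0 = false) : lexLt σ oneZeros :=
  ⟨0, fun _ hi => absurd hi (Nat.not_lt_zero _), Bool.lt_iff.mpr ⟨h, rfl⟩⟩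

lemma altZeroOne_lexLt {σ : Omega} (h₀ : σ 0 = false) (h₁ : σ 1 = true) (h₂ : σ 2 = true) :
    lexLt altZeroOne σ := by
  refine ⟨2, fun i hi => ?_, Bool.lt_iff.mpr ⟨rfl, h₂⟩⟩
  interval_cases i
  exacts [h₀.symm, h₁.symm]

lemma not_altZeroOne_lexLt_of_noEleven {σ : Omega} (hσ : NoEleven σ) (h₀ : σ 0 = false) :
    ¬ lexLt altZeroOne σ := by
  rintro ⟨k, hagree, hk⟩
  obtain ⟨hα, hσk⟩ := Bool.lt_iff.mp hk
  have hk_even : k % 2 = 0 := by simpa [altZeroOne] using hα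
  obtain _ | _ | t := k
  · exact Bool.false_ne_true (h₀ ▸ hσk)
  · omega
  · have : σ (t + 1) = true := by
      rw [← hagree (t + 1) (by omega)]
      simp only [altZeroOne, decide_eq_true_eq]
      omega
    exact hσ (t + 1) ⟨this, hσk⟩

lemma eq_oneZeros_of_noEleven {σ : Omega} (hσ : NoEleven σ) (h₁ : lexLt altZeroOne σ)
    (h₂ : lexLe σ oneZeros) : σ = oneZeros := by
  rcases h₂ with h₂ | h₂
  · exact absurd h₁ (not_altZeroOne_lexLt_of_noEleven hσ (eq_false_of_lexLt_oneZeros h₂))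
  · exact h₂

lemma eq_altZeroOne_of_noEleven {σ : Omega} (hσ : NoEleven σ) (h₁ : lexLe altZeroOne σ)
    (h₂ : lexLt σ oneZeros) : σ = altZeroOne := by
  rcases h₁ with h₁ | h₁
  · exact absurd h₁ (not_altZeroOne_lexLt_of_noEleven hσ (eq_false_of_lexLt_oneZeros h₂))
  · exact h₁.symm

lemma cons0_lexLe_altZeroOne {ω : Omega} (hω : NoEleven ω) : lexLe (cons0 ω) altZeroOne :=
  lexLe_of_not_lexLt (not_altZeroOne_lexLt_of_noEleven hω.cons0 rfl)

theorem admissible_altZeroOne_oneZeros : Admissible altZeroOne oneZeros := by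
  refine ⟨rfl, rfl, rfl, rfl, fun n ⟨h₁, h₂⟩ => ?_, fun n ⟨h₁, h₂⟩ => ?_⟩
  · exact shift_iterate_altZeroOne_ne n 0
      (eq_oneZeros_of_noEleven (noEleven_altZeroOne.shift_iterate n) h₁ h₂)
  · exact shift_iterate_altZeroOne_ne 0 n
      (eq_altZeroOne_of_noEleven (noEleven_oneZeros.shift_iterate n) h₁ h₂).symm

lemma noEleven_of_mem_omega0 {ω : Omega}
    (h : ω ∈ Omega0Minus altZeroOne oneZeros ∪ Omega0Plus altZeroOne oneZeros) :
    NoEleven ω := by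
  have hcons : lexLe (cons0 ω) altZeroOne := by
    rcases h with ⟨-, h⟩ | ⟨-, h⟩
    exacts [h, .inl h]
  have hshift : ∀ n, ¬ (lexLt altZeroOne (shift^[n] ω) ∧ lexLt (shift^[n] ω) oneZeros) := by
    rcases h with ⟨h, -⟩ | ⟨h, -⟩
    · exact fun n hn => h n ⟨hn.1, .inl hn.2⟩
    · exact fun n hn => h n ⟨.inl hn.1, hn.2⟩
  intro i hi
  obtain ⟨_ | s, h₀, h₁, h₂⟩ := exists_zero_one_one (σ := cons0 ω) (i := i + 1) rfl hi.1 hi.2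
  · exact not_lexLt_of_lexLe hcons (altZeroOne_lexLt h₀ h₁ h₂)
  · have h₀ : shift^[s] ω 0 = false := by rwa [shift_iterate_apply, Nat.zero_add]
    refine hshift s ⟨altZeroOne_lexLt h₀ ?_ ?_, lexLt_oneZeros h₀⟩
    · rwa [shift_iterate_apply, Nat.add_comm]
    · rwa [shift_iterate_apply, Nat.add_comm]

/-- A `11`-free string lies in `Ω⁰_{(α,β,+)}` if it ends in `β`, and in `Ω⁰_{(α,β,−)}` otherwise. -/
lemma mem_omega0_of_noEleven {ω : Omega} (hω : NoEleven ω) :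
    ω ∈ Omega0Minus altZeroOne oneZeros ∪ Omega0Plus altZeroOne oneZeros := by
  by_cases hβ : ∃ n, shift^[n] ω = oneZeros
  · obtain ⟨n, hn⟩ := hβ
    refine .inr ⟨fun m ⟨h₁, h₂⟩ => ?_, ?_⟩
    · have hm := eq_altZeroOne_of_noEleven (hω.shift_iterate m) h₁ h₂
      apply shift_iterate_altZeroOne_ne n m
      rw [← hm, ← hn, ← Function.iterate_add_apply, ← Function.iterate_add_apply, Nat.add_comm]
    · refine (cons0_lexLe_altZeroOne hω).resolve_right fun h => ?_
      apply shift_iterate_altZeroOne_ne (n + 1) 0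
      rw [← h, Function.iterate_succ_apply, shift_cons0, hn]
      rfl
  · exact .inl ⟨fun n ⟨h₁, h₂⟩ => hβ ⟨n, eq_oneZeros_of_noEleven (hω.shift_iterate n) h₁ h₂⟩,
      cons0_lexLe_altZeroOne hω⟩

lemma omega0Minus_union_omega0Plus_eq_setOf_noEleven :
    Omega0Minus altZeroOne oneZeros ∪ Omega0Plus altZeroOne oneZeros = {ω | NoEleven ω} :=
  Set.ext fun _ => ⟨noEleven_of_mem_omega0, mem_omega0_of_noEleven⟩

lemma mem_dot_noEleven_iff {d : ℤ → Bool} (hd : IsDecimal d) :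
    d ∈ dot {ω | NoEleven ω} ↔ ¬ ∃ j, d j = true ∧ d (j + 1) = true := by
  constructor
  · rintro ⟨m, γ, hγ, hzero, hd⟩ ⟨j, hj, hj'⟩
    have hmj : m ≤ j := by
      by_contra! hjm
      exact Bool.false_ne_true (hzero j hjm ▸ hj)
    obtain ⟨i, rfl⟩ : ∃ i : ℕ, j = m + i := ⟨(j - m).toNat, by omega⟩
    refine hγ i ⟨hd i ▸ hj, ?_⟩
    rw [← hd (i + 1)]
    simpa [add_assoc] using hj'
  · intro h
    obtain ⟨m, hm⟩ := hd
    refine ⟨m, fun i => d (m + i), fun i hi => h ⟨m + i, ?_⟩, hm, fun _ => rfl⟩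
    simpa [add_assoc] using hi

/-- For `α = \overline{01}` and `β = 1\overline{0}`, the pair `(α,β)` is
admissible and a decimal lies in `Ω^•_{(α,β)}` iff it does not contain `11` as a
substring. -/
theorem stmt_17 :
    Admissible (fun n => decide (n % 2 = 1)) (fun n => decide (n = 0)) ∧
    ∀ d : ℤ → Bool, IsDecimal d →
      (d ∈ dotUnion (fun n => decide (n % 2 = 1)) (fun n => decide (n = 0)) ↔
        ¬ ∃ j : ℤ, d j = true ∧ d (j + 1) = true) :=
  ⟨admissible_altZeroOne_oneZeros, fun d hd => by
    rw [← mem_dot_noEleven_iff hd, ← omega0Minus_union_omega0Plus_eq_setOf_noEleven]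
    rfl⟩
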